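/- Let n ∈ ℕ and d, p ∈ ℝⁿ with p ≠ 0, and let r ∈ [0, ζ). Then U_r ⊆ U_dp, and |n_dp(z)| ≥ ‖p‖·(ζ − r) for all z ∈ U_r. -/

import Mathlib

/-! On the real axis `‖d - t • p‖ = ‖p‖ · |t - w|`, and `⟨d - z p, d - z p⟩ = ‖p‖² (z - w)(z - w̄)`
for all complex `z`, so `ζ` is the distance from `[-1, 1]` to the conjugate pair of roots `w, w̄`.
A point of `U_r` is therefore at distance at least `ζ - r` from both roots, which bounds the
quadratic from below. The same estimate keeps `U_r` off the cuts `w_r + i y`, `|y| ≥ w_i`; off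
these cuts the quadratic avoids `(-∞, 0]`, where the principal square root has `|√u| = √|u|`. -/

open Complex Set

/-- The principal branch of the complex square root,
`√z := √|z| · (z+|z|)/|z+|z||`. -/
noncomputable def csqrt (z : ℂ) : ℂ :=
  (Real.sqrt ‖z‖ : ℂ) *
    ((z + ((‖z‖ : ℝ) : ℂ)) / ((‖z + ((‖z‖ : ℝ) : ℂ)‖ : ℝ) : ℂ))

/-- The Euclidean norm on `ℝⁿ`. -/
noncomputable def euclNorm {n : ℕ} (x : Fin n → ℝ) : ℝ := Real.sqrt (∑ j, (x j) ^ 2)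

open ComplexConjugate

theorem norm_csqrt {z : ℂ} (hz : z ∈ slitPlane) : ‖csqrt z‖ = √‖z‖ := by
  have hz' : z + ((‖z‖ : ℝ) : ℂ) ≠ 0 := by
    intro h
    rw [add_eq_zero_iff_eq_neg] at h
    exact (norm_nonneg z).not_gt (neg_ofReal_mem_slitPlane.mp (h ▸ hz))
  rw [csqrt, norm_mul, norm_div, norm_real, norm_real, norm_norm,
    div_self (norm_ne_zero_iff.mpr hz'), mul_one, Real.norm_of_nonneg (Real.sqrt_nonneg _)]

theorem ofReal_mul_mem_slitPlane {a : ℝ} (ha : 0 < a) {z : ℂ} (hz : z ∈ slitPlane) :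
    (a : ℂ) * z ∈ slitPlane := by
  rw [mem_slitPlane_iff, re_ofReal_mul, im_ofReal_mul] at *
  exact hz.imp (mul_pos ha) (mul_ne_zero ha.ne')

theorem sq_add_sq_mem_slitPlane {a : ℝ} (ha : 0 ≤ a) {u : ℂ} (hu : ¬ (u.re = 0 ∧ a ≤ |u.im|)) :
    u ^ 2 + (a : ℂ) ^ 2 ∈ slitPlane := by
  rw [mem_slitPlane_iff]
  by_contra! h
  obtain ⟨hre, him⟩ := h
  simp only [add_re, add_im, sq, mul_re, mul_im, ofReal_re, ofReal_im] at hre him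
  have hre0 : u.re = 0 := by
    rcases mul_eq_zero.mp (show u.re * u.im = 0 by linarith) with h0 | h0
    · exact h0
    · rw [h0] at hre
      nlinarith
  rw [hre0] at hre
  exact hu ⟨hre0, by simpa [abs_of_nonneg ha] using sq_le_sq.mp (by nlinarith : a ^ 2 ≤ u.im ^ 2)⟩

theorem norm_ofReal_sub_le_norm_sub {z w : ℂ} (t : ℝ) (hre : z.re = w.re)
    (him : |w.im| ≤ |z.im|) : ‖(t : ℂ) - w‖ ≤ ‖z - t‖ := by
  rw [← sq_le_sq₀ (norm_nonneg _) (norm_nonneg _), Complex.sq_norm, Complex.sq_norm,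
    normSq_apply, normSq_apply]
  simp only [sub_re, sub_im, ofReal_re, ofReal_im, hre]
  nlinarith [sq_le_sq.mpr him]

theorem sq_sub_le_norm_sub_mul_sub_conj {z w : ℂ} (t : ℝ) {r : ℝ} (hzt : ‖z - t‖ ≤ r)
    (hr : r ≤ ‖(t : ℂ) - w‖) : (‖(t : ℂ) - w‖ - r) ^ 2 ≤ ‖(z - w) * (z - conj w)‖ := by
  have hdist (v : ℂ) : ‖(t : ℂ) - v‖ - r ≤ ‖z - v‖ := by
    linarith [norm_sub_le_norm_sub_add_norm_sub (t : ℂ) z v, norm_sub_rev (t : ℂ) z]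
  have hconj : ‖(t : ℂ) - conj w‖ = ‖(t : ℂ) - w‖ := by
    rw [← norm_conj, map_sub, conj_conj, conj_ofReal]
  rw [norm_mul, sq]
  exact mul_le_mul (hdist w) (hconj ▸ hdist (conj w)) (sub_nonneg.mpr hr) (norm_nonneg _)

section BranchPoint

variable {n : ℕ}

theorem euclNorm_nonneg (x : Fin n → ℝ) : 0 ≤ euclNorm x := Real.sqrt_nonneg _

theorem euclNorm_sq (x : Fin n → ℝ) : euclNorm x ^ 2 = ∑ j, x j ^ 2 :=
  Real.sq_sqrt (Finset.sum_nonneg fun j _ => sq_nonneg (x j))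

theorem euclNorm_pos {x : Fin n → ℝ} (hx : x ≠ 0) : 0 < euclNorm x := by
  obtain ⟨j, hj⟩ := Function.ne_iff.mp hx
  exact Real.sqrt_pos.mpr <| Finset.sum_pos' (fun i _ => sq_nonneg (x i))
    ⟨j, Finset.mem_univ j, sq_pos_iff.mpr hj⟩

variable (d p : Fin n → ℝ)

noncomputable def branchRe : ℝ := (∑ j, d j * p j) / euclNorm p ^ 2

noncomputable def branchIm : ℝ := √(euclNorm d ^ 2 / euclNorm p ^ 2 - branchRe d p ^ 2)

noncomputable def branchPt : ℂ := branchRe d p + branchIm d p * I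

variable {d p}

theorem branchIm_nonneg : 0 ≤ branchIm d p := Real.sqrt_nonneg _

@[simp] theorem branchPt_re : (branchPt d p).re = branchRe d p := by simp [branchPt]

@[simp] theorem branchPt_im : (branchPt d p).im = branchIm d p := by simp [branchPt]

theorem sub_branchRe_sq_add_branchIm_sq (z : ℂ) :
    (z - branchRe d p) ^ 2 + (branchIm d p : ℂ) ^ 2 =
      (z - branchPt d p) * (z - conj (branchPt d p)) := by
  simp only [branchPt, map_add, map_mul, conj_ofReal, conj_I]
  linear_combination (branchIm d p : ℂ) ^ 2 * I_sq

theorem branchIm_sq (hp : p ≠ 0) :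
    branchIm d p ^ 2 = euclNorm d ^ 2 / euclNorm p ^ 2 - branchRe d p ^ 2 := by
  have hP := pow_pos (euclNorm_pos hp) 2
  refine Real.sq_sqrt ?_
  have hCS := Finset.sum_mul_sq_le_sq_mul_sq Finset.univ d p
  rw [← euclNorm_sq, ← euclNorm_sq] at hCS
  rw [branchRe, div_pow, sub_nonneg, div_le_div_iff₀ (by positivity) hP]
  nlinarith

theorem sum_sub_mul_mul_self (hp : p ≠ 0) (z : ℂ) :
    ∑ j, ((d j : ℂ) - z * p j) * ((d j : ℂ) - z * p j) =
      ((euclNorm p ^ 2 : ℝ) : ℂ) * ((z - branchRe d p) ^ 2 + (branchIm d p : ℂ) ^ 2) := by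
  have hp' : euclNorm p ≠ 0 := (euclNorm_pos hp).ne'
  have hC : ∑ j, d j * p j = branchRe d p * euclNorm p ^ 2 := by
    rw [branchRe]; field_simp [hp']
  have hD : ∑ j, d j ^ 2 = (branchRe d p ^ 2 + branchIm d p ^ 2) * euclNorm p ^ 2 := by
    rw [branchIm_sq hp, ← euclNorm_sq]; field_simp [hp']; ring
  have hexpand : ∑ j, ((d j : ℂ) - z * p j) * ((d j : ℂ) - z * p j) =
      ((∑ j, d j ^ 2 : ℝ) : ℂ) - 2 * z * ((∑ j, d j * p j : ℝ) : ℂ) +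
        z ^ 2 * ((∑ j, p j ^ 2 : ℝ) : ℂ) := by
    push_cast
    rw [Finset.mul_sum, Finset.mul_sum, ← Finset.sum_sub_distrib, ← Finset.sum_add_distrib]
    exact Finset.sum_congr rfl fun j _ => by ring
  rw [hexpand, hC, hD, ← euclNorm_sq]
  push_cast
  ring

theorem euclNorm_sub_smul (hp : p ≠ 0) (t : ℝ) :
    euclNorm (d - t • p) = euclNorm p * ‖(t : ℂ) - branchPt d p‖ := by
  refine (sq_eq_sq₀ (euclNorm_nonneg _) (mul_nonneg (euclNorm_nonneg p) (norm_nonneg _))).mp ?_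
  rw [mul_pow, euclNorm_sq, Complex.sq_norm, normSq_apply]
  apply ofReal_injective
  simpa [branchPt, sq] using sum_sub_mul_mul_self (d := d) hp (t : ℂ)

theorem sInf_le_norm_ofReal_sub_branchPt (hp : p ≠ 0) {s : Set ℝ} {t : ℝ} (ht : t ∈ s) :
    sInf {x : ℝ | ∃ t ∈ s, x = euclNorm (d - t • p) / euclNorm p} ≤ ‖(t : ℂ) - branchPt d p‖ := by
  refine csInf_le ⟨0, ?_⟩ ⟨t, ht, ?_⟩
  · rintro _ ⟨u, -, rfl⟩
    exact div_nonneg (euclNorm_nonneg _) (euclNorm_nonneg _)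
  · rw [euclNorm_sub_smul hp, mul_div_cancel_left₀ _ (euclNorm_pos hp).ne']

end BranchPoint

theorem stmt2_general (n : ℕ) (d p : Fin n → ℝ) (hp : p ≠ 0)
    (wr : ℝ) (hwr : wr = (∑ j, d j * p j) / (euclNorm p) ^ 2)
    (wi : ℝ) (hwi : wi = Real.sqrt ((euclNorm d) ^ 2 / (euclNorm p) ^ 2 - wr ^ 2))
    (w : ℂ) (hw : w = (wr : ℂ) + (wi : ℂ) * Complex.I)
    (U : Set ℂ) (hU : U = {z : ℂ | ¬ (z.re = wr ∧ wi ≤ |z.im|)})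
    (ndp : ℂ → ℂ)
    (hndp : ndp = fun z => csqrt (∑ j, ((d j : ℂ) - z * (p j : ℂ)) * ((d j : ℂ) - z * (p j : ℂ))))
    (ζ : ℝ) (hζ : ζ = sInf {x : ℝ | ∃ t ∈ Set.Icc (-1 : ℝ) 1, x = euclNorm (d - t • p) / euclNorm p})
    (r : ℝ) (hrζ : r < ζ)
    (Ur : Set ℂ) (hUr : Ur = {z : ℂ | ∃ t ∈ Set.Icc (-1 : ℝ) 1, ‖z - (t : ℂ)‖ ≤ r}) :
    Ur ⊆ U ∧ ∀ z ∈ Ur, euclNorm p * (ζ - r) ≤ ‖ndp z‖ := by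
  obtain rfl : wr = branchRe d p := hwr
  obtain rfl : wi = branchIm d p := hwi
  obtain rfl : w = branchPt d p := hw
  subst hndp
  have hζ_le : ∀ t ∈ Icc (-1 : ℝ) 1, ζ ≤ ‖(t : ℂ) - branchPt d p‖ := fun t ht =>
    hζ ▸ sInf_le_norm_ofReal_sub_branchPt hp ht
  have hsub : Ur ⊆ U := by
    rw [hUr, hU]
    rintro z ⟨t, ht, hzt⟩ ⟨hre, him⟩
    have hdist := norm_ofReal_sub_le_norm_sub t (w := branchPt d p) (by simpa using hre)
      (by simpa [abs_of_nonneg branchIm_nonneg] using him)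
    linarith [hζ_le t ht]
  refine ⟨hsub, fun z hz => ?_⟩
  have hslit : (z - branchRe d p) ^ 2 + (branchIm d p : ℂ) ^ 2 ∈ slitPlane :=
    sq_add_sq_mem_slitPlane branchIm_nonneg (by simpa [hU, sub_eq_zero] using hsub hz)
  rw [hUr] at hz
  obtain ⟨t, ht, hzt⟩ := hz
  have hP := pow_pos (euclNorm_pos hp) 2
  have hroots := sq_sub_le_norm_sub_mul_sub_conj t hzt (hrζ.le.trans (hζ_le t ht))
  dsimp only
  rw [sum_sub_mul_mul_self hp z, norm_csqrt (ofReal_mul_mem_slitPlane hP hslit), norm_mul,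
    norm_real, Real.norm_of_nonneg hP.le, sub_branchRe_sq_add_branchIm_sq]
  refine Real.le_sqrt_of_sq_le ?_
  rw [mul_pow]
  gcongr
  exact hroots.trans' (pow_le_pow_left₀ (by linarith) (by linarith [hζ_le t ht]) 2)

/-- for `0 ≤ r < ζ` the neighborhood `U_r` of `[−1,1]` is contained in
`U_dp` and `|n_dp(z)| ≥ ‖p‖·(ζ − r)` on `U_r`. -/
theorem stmt2 (n : ℕ) (d p : Fin n → ℝ) (hp : p ≠ 0)
    (wr : ℝ) (hwr : wr = (∑ j, d j * p j) / (euclNorm p) ^ 2)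
    (wi : ℝ) (hwi : wi = Real.sqrt ((euclNorm d) ^ 2 / (euclNorm p) ^ 2 - wr ^ 2))
    (w : ℂ) (hw : w = (wr : ℂ) + (wi : ℂ) * Complex.I)
    (U : Set ℂ) (hU : U = {z : ℂ | ¬ (z.re = wr ∧ wi ≤ |z.im|)})
    (ndp : ℂ → ℂ)
    (hndp : ndp = fun z => csqrt (∑ j, ((d j : ℂ) - z * (p j : ℂ)) * ((d j : ℂ) - z * (p j : ℂ))))
    (ζ : ℝ) (hζ : ζ = sInf {x : ℝ | ∃ t ∈ Set.Icc (-1 : ℝ) 1, x = euclNorm (d - t • p) / euclNorm p})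
    (r : ℝ) (hr0 : 0 ≤ r) (hrζ : r < ζ)
    (Ur : Set ℂ) (hUr : Ur = {z : ℂ | ∃ t ∈ Set.Icc (-1 : ℝ) 1, ‖z - (t : ℂ)‖ ≤ r}) :
    Ur ⊆ U ∧ ∀ z ∈ Ur, euclNorm p * (ζ - r) ≤ ‖ndp z‖ :=
  stmt2_general n d p hp wr hwr wi hwi w hw U hU ndp hndp ζ hζ r hrζ Ur hUr
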